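/- arXiv:2405.01164 — 9 statements merged into one kernel-verified Lean document; each statement's English description precedes it below -/
import Mathlib

section
/- Let A, B, C, D be nonempty sets and I ⊆ F_{CD}, J ⊆ F_{BC}, K ⊆ F_{AB}. If J is minor-closed (i.e., J · Proj_B ⊆ J, where Proj_B is the set of all projections on B), then (IJ)K = I(JK). -/
/-- Function class composition. -/
def ClassComp {A B C : Type*} (I : Set (Σ n : ℕ, (Fin n → B) → C))
    (J : Set (Σ n : ℕ, (Fin n → A) → B)) : Set (Σ n : ℕ, (Fin n → A) → C) :=
  { h | ∃ (n m : ℕ) (f : (Fin n → B) → C) (g : Fin n → (Fin m → A) → B),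
      (⟨n, f⟩ : Σ n : ℕ, (Fin n → B) → C) ∈ I ∧
      (∀ i, (⟨m, g i⟩ : Σ n : ℕ, (Fin n → A) → B) ∈ J) ∧
      h = ⟨m, fun a => f fun i => g i a⟩ }

/-- The set of all projections on `B`. -/
def Projections (B : Type*) : Set (Σ n : ℕ, (Fin n → B) → B) :=
  { p | ∃ (n : ℕ) (i : Fin n), p = ⟨n, fun a => a i⟩ }

lemma mem_classComp_iff {A B C : Type*} {I : Set (Σ n : ℕ, (Fin n → B) → C)}
    {J : Set (Σ n : ℕ, (Fin n → A) → B)} {p : ℕ} {h : (Fin p → A) → C} :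
    (⟨p, h⟩ : Σ n : ℕ, (Fin n → A) → C) ∈ ClassComp I J ↔
    ∃ (n : ℕ) (f : (Fin n → B) → C) (g : Fin n → (Fin p → A) → B),
      (⟨n, f⟩ : Σ n : ℕ, (Fin n → B) → C) ∈ I ∧
      (∀ i, (⟨p, g i⟩ : Σ n : ℕ, (Fin n → A) → B) ∈ J) ∧
      h = fun a => f fun i => g i a := by
  constructor
  · rintro ⟨n, m, f, g, hf, hg, heq⟩
    obtain ⟨rfl, h2⟩ := Sigma.mk.inj_iff.mp heq
    exact ⟨n, f, g, hf, hg, eq_of_heq h2⟩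
  · rintro ⟨n, f, g, hf, hg, rfl⟩
    exact ⟨n, p, f, g, hf, hg, rfl⟩

theorem stmt1 {A B C D : Type*} [Nonempty A] [Nonempty B] [Nonempty C] [Nonempty D]
    (I : Set (Σ n : ℕ, (Fin n → C) → D)) (J : Set (Σ n : ℕ, (Fin n → B) → C))
    (K : Set (Σ n : ℕ, (Fin n → A) → B))
    (hJ : ClassComp J (Projections B) ⊆ J) :
    ClassComp (ClassComp I J) K = ClassComp I (ClassComp J K) := by
  ext h
  obtain ⟨p, h⟩ := h
  rw [mem_classComp_iff, mem_classComp_iff]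
  constructor
  · rintro ⟨N, F, k, hF, hk, rfl⟩
    rw [mem_classComp_iff] at hF
    obtain ⟨n, f, g, hf, hg, rfl⟩ := hF
    exact ⟨n, f, fun i a => g i fun l => k l a, hf,
      fun i => mem_classComp_iff.mpr ⟨N, g i, k, hg i, hk, rfl⟩, rfl⟩
  · rintro ⟨n, f, H, hf, hH, rfl⟩
    -- each H i ∈ J ∘ K with its own inner arity
    choose ni fi gi hfi hgi hHeq using fun i => mem_classComp_iff.mp (hH i)
    set T := Σ i : Fin n, Fin (ni i) with hT
    let e : T ≃ Fin (Fintype.card T) := Fintype.equivFin T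
    set N := Fintype.card T with hN
    -- the J-functions of arity N
    refine ⟨N, fun b => f fun i => fi i fun j => b (e ⟨i, j⟩),
      fun l a => gi (e.symm l).1 (e.symm l).2 a, ?_, ?_, ?_⟩
    · rw [mem_classComp_iff]
      exact ⟨n, f, fun i b => fi i fun j => b (e ⟨i, j⟩), hf, fun i =>
        hJ (mem_classComp_iff.mpr ⟨ni i, fi i, fun j b => b (e ⟨i, j⟩), hfi i,
          fun j => ⟨N, e ⟨i, j⟩, rfl⟩, rfl⟩), rfl⟩
    · intro l
      exact hgi (e.symm l).1 (e.symm l).2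
    · funext a
      congr 1
      funext i
      rw [hHeq i]
      refine congrArg (fi i) (funext fun j => ?_)
      have hs : e.symm (e ⟨i, j⟩) = ⟨i, j⟩ := e.symm_apply_apply _
      show gi i j a = gi (e.symm (e ⟨i, j⟩)).1 (e.symm (e ⟨i, j⟩)).2 a
      rw [hs]
end

section
/- Let A, B, C, D be nonempty sets and I ⊆ F_{CD}, J ⊆ F_{BC}, K ⊆ F_{AB}. If every member of I is essentially at most unary and I contains the unary minors of its members, then (IJ)K = I(JK). -/
/-- A function is essentially at most unary if it depends on at most one argument. -/
def EssAtMostUnary {A B : Type*} {n : ℕ} (f : (Fin n → A) → B) : Prop :=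
  ∃ (i : Fin n) (φ : A → B), ∀ a, f a = φ (a i)

theorem stmt2 {A B C D : Type*} [Nonempty A] [Nonempty B] [Nonempty C] [Nonempty D]
    (I : Set (Σ n : ℕ, (Fin n → C) → D)) (J : Set (Σ n : ℕ, (Fin n → B) → C))
    (K : Set (Σ n : ℕ, (Fin n → A) → B))
    (hI1 : ∀ p ∈ I, EssAtMostUnary p.2)
    (hI2 : ∀ p ∈ I, (⟨1, fun a => p.2 fun _ => a 0⟩ : Σ n : ℕ, (Fin n → C) → D) ∈ I) :
    ClassComp (ClassComp I J) K = ClassComp I (ClassComp J K) := by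
  ext x
  constructor
  · rintro ⟨n, m, F, k, ⟨p, q, f, g, hf, hg, hF⟩, hk, rfl⟩
    obtain ⟨rfl, hF2⟩ := Sigma.mk.inj_iff.mp hF
    rw [heq_eq_eq] at hF2
    subst hF2
    exact ⟨p, m, f, fun j a => g j fun i => k i a, hf,
      fun j => ⟨n, m, g j, k, hg j, hk, rfl⟩, rfl⟩
  · rintro ⟨p, m, f, G, hf, hG, rfl⟩
    obtain ⟨i₀, φ, hφ⟩ := hI1 ⟨p, f⟩ hf
    obtain ⟨n, m', g, k, hg, hk, hGe⟩ := hG i₀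
    obtain ⟨rfl, hG2⟩ := Sigma.mk.inj_iff.mp hGe
    rw [heq_eq_eq] at hG2
    refine ⟨n, m, (fun b => f fun _ => g b : (Fin n → B) → D), k,
      ⟨1, n, fun a => f fun _ => a 0, fun _ => g, hI2 _ hf, fun _ => hg, rfl⟩, hk, ?_⟩
    congr 1
    funext a
    have : G i₀ a = g fun i => k i a := congrFun hG2 a
    rw [show f (fun i => G i a) = φ (G i₀ a) from hφ _, this]
    exact (hφ fun _ => g fun i => k i a).symm
end

section
/- Let A, B, C be nonempty sets, F ⊆ F_{BC}, and G_j ⊆ F_{AB} for j ∈ J. If every member of F is essentially at most unary, then F(⋃_{j∈J} G_j) = ⋃_{j∈J} (F G_j). -/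
theorem stmt4 {A B C : Type*} [Nonempty A] [Nonempty B] [Nonempty C] {ι : Type*}
    (F : Set (Σ n : ℕ, (Fin n → B) → C)) (G : ι → Set (Σ n : ℕ, (Fin n → A) → B))
    (hF : ∀ p ∈ F, EssAtMostUnary p.2) :
    ClassComp F (⋃ j, G j) = ⋃ j, ClassComp F (G j) := by
  ext h
  simp only [Set.mem_iUnion]
  constructor
  · rintro ⟨n, m, f, g, hf, hg, rfl⟩
    obtain ⟨i, φ, hφ⟩ := hF _ hf
    obtain ⟨j, hj⟩ := Set.mem_iUnion.mp (hg i)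
    refine ⟨j, n, m, f, fun _ => g i, hf, fun _ => hj, ?_⟩
    congr 1
    funext a
    exact (hφ (fun k => g k a)).trans (hφ (fun _ => g i a)).symm
  · rintro ⟨j, n, m, f, g, hf, hg, rfl⟩
    exact ⟨n, m, f, g, hf, fun i => Set.mem_iUnion.mpr ⟨j, hg i⟩, rfl⟩
end

section
/- Let C^k_a denote the alternating 2-chain of length k whose least element has label a ∈ {0,1}: its underlying set is {0,1,…,k} with the natural order and labeling c(i) = a + i mod 2. Then there exists a label- and order-preserving map (homomorphism) from C^k_a to C^ℓ_b if and only if k < ℓ or (k, a) = (ℓ, b). -/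
/-!
Labels alternate along both chains, so a label-preserving map can never send two consecutive
elements to the same point: a monotone one is strictly monotone, hence `k ≤ ℓ`, and for `k = ℓ`
it is the identity, which forces `a = b`. Conversely, for `k < ℓ` there is room to shift `C^k_a`
up by `0` or `1` inside `C^ℓ_b` so that the labels match.
-/

namespace AlternatingChain

variable {m n : ℕ} {a b : ZMod 2} {h : Fin (m + 1) → Fin n}

theorem strictMono_of_monotone (hmono : Monotone h)
    (hlab : ∀ i, b + ((h i : ℕ) : ZMod 2) = a + ((i : ℕ) : ZMod 2)) : StrictMono h := by
  rw [Fin.strictMono_iff_lt_succ]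
  refine fun i ↦ (hmono (Fin.castSucc_le_succ i)).lt_of_ne fun heq ↦ ?_
  have hparity := (hlab i.castSucc).symm.trans (heq ▸ hlab i.succ)
  simp only [Fin.val_castSucc, Fin.val_succ, add_right_inj] at hparity
  rw [ZMod.natCast_eq_natCast_iff'] at hparity
  omega

theorem exists_monotone_of_lt {k l : ℕ} (hkl : k < l) (a b : ZMod 2) :
    ∃ h : Fin (k + 1) → Fin (l + 1), Monotone h ∧
      ∀ i, b + ((h i : ℕ) : ZMod 2) = a + ((i : ℕ) : ZMod 2) := by
  have hshift : (a - b).val < 2 := ZMod.val_lt _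
  refine ⟨fun i ↦ ⟨i + (a - b).val, by omega⟩, fun i j hij ↦ Nat.add_le_add_right hij _, ?_⟩
  intro i
  push_cast
  rw [ZMod.natCast_zmod_val]
  ring

end AlternatingChain

/-- Homomorphisms of alternating 2-chains: `C^k_a` is the chain `0 < 1 < ⋯ < k`
with label `c(i) = a + i` in `ZMod 2`.  A homomorphism `C^k_a → C^ℓ_b` (monotone
label-preserving map) exists iff `k < ℓ` or `(k, a) = (ℓ, b)`. -/
theorem stmt7 (k l : ℕ) (a b : ZMod 2) :
    (∃ h : Fin (k + 1) → Fin (l + 1), Monotone h ∧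
      ∀ i : Fin (k + 1), b + ((h i : ℕ) : ZMod 2) = a + ((i : ℕ) : ZMod 2)) ↔
    (k < l ∨ (k = l ∧ a = b)) := by
  constructor
  · rintro ⟨h, hmono, hlab⟩
    have hsm := AlternatingChain.strictMono_of_monotone hmono hlab
    rcases (Nat.succ_le_succ_iff.mp (Fin.le_of_injective h hsm.injective)).lt_or_eq with hlt | rfl
    · exact Or.inl hlt
    · have hzero := hlab 0
      rw [hsm.eq_id] at hzero
      simpa using hzero.symm
  · rintro (hlt | ⟨rfl, rfl⟩)
    · exact AlternatingChain.exists_monotone_of_lt hlt a b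
    · exact ⟨id, monotone_id, fun _ ↦ rfl⟩
end

section
/- Every finite 2-poset with a least element is homomorphically equivalent to (any of) its longest alternating 2-chains: if P is a finite 2-poset with least element ⊥ and A ⊆ P is a longest alternating chain starting at ⊥, then the map x ↦ a_{d(x)} (sending x to the element of A at position equal to the alternation depth d(x) of x) is a homomorphism P → A, and the inclusion A → P is a homomorphism. -/
/-- An alternating chain in a 2-poset `(P, ≤, c)`: a strictly increasing sequence
along which the labels alternate. -/
def IsAltChain {P : Type*} [PartialOrder P] (c : P → Bool) {d : ℕ} (a : Fin (d + 1) → P) :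
    Prop :=
  StrictMono a ∧ ∀ i : Fin d, c (a i.castSucc) ≠ c (a i.succ)

/-- The alternation depth of `x`: the length of the longest alternating chain
contained in the interval `[⊥, x]`. -/
noncomputable def altDepth {P : Type*} [PartialOrder P] [OrderBot P] (c : P → Bool)
    (x : P) : ℕ :=
  sSup { d | ∃ a : Fin (d + 1) → P, IsAltChain c a ∧ ∀ i, a i ≤ x }

/-!
Along an alternating chain the label at position `i` is the label at position `0` flipped `i` times.
An alternating chain in `[⊥, x]` of maximal length `d(x)` starts with the label of `⊥` and ends
with the label of `x`, since otherwise `⊥` could be prepended or `x` appended to it. Hence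
`c x = c ⊥ xor (d(x) odd)`, which is also the label of `a_{d(x)}` because `a_0 = ⊥`.
-/

namespace IsAltChain

variable {P : Type*} [PartialOrder P] {c : P → Bool} {d : ℕ} {b : Fin (d + 1) → P}

theorem const (c : P → Bool) (p : P) : IsAltChain c (fun _ : Fin 1 => p) :=
  ⟨fun i j hij => (hij.ne (Subsingleton.elim (α := Fin 1) i j)).elim, fun i => i.elim0⟩

theorem apply_eq_xor_bodd (hb : IsAltChain c b) (i : Fin (d + 1)) :
    c (b i) = xor (c (b 0)) (i : ℕ).bodd := by
  induction i using Fin.induction with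
  | zero => simp
  | succ i ih =>
    rw [Fin.val_succ, Nat.bodd_succ, Bool.xor_not, ← Fin.val_castSucc, ← ih]
    exact Bool.eq_not_of_ne (hb.2 i).symm

theorem cons {p : P} (hb : IsAltChain c b) (hp : p < b 0) (hc : c p ≠ c (b 0)) :
    IsAltChain c (Fin.cons p b : Fin (d + 2) → P) := by
  refine ⟨StrictMono.vecCons hb.1 hp, fun i => ?_⟩
  cases i using Fin.cases with
  | zero => simpa using hc
  | succ i => simpa only [← Fin.succ_castSucc, Fin.cons_succ] using hb.2 i

theorem snoc {x : P} (hb : IsAltChain c b) (hx : b (Fin.last d) < x)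
    (hc : c (b (Fin.last d)) ≠ c x) : IsAltChain c (Fin.snoc b x : Fin (d + 2) → P) := by
  refine ⟨Fin.strictMono_iff_lt_succ.2 fun i => ?_, fun i => ?_⟩
  · cases i using Fin.lastCases with
    | last => simpa using hx
    | cast i =>
      rw [Fin.snoc_castSucc, Fin.succ_castSucc, Fin.snoc_castSucc]
      exact hb.1 Fin.castSucc_lt_succ
  · cases i using Fin.lastCases with
    | last => simpa using hc
    | cast i =>
      rw [Fin.snoc_castSucc, Fin.succ_castSucc, Fin.snoc_castSucc]
      exact hb.2 i

end IsAltChain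

section altDepth

variable {P : Type*} [PartialOrder P] [OrderBot P] {c : P → Bool} {s : ℕ}

theorem le_altDepth (hs : ∀ (d : ℕ) (b : Fin (d + 1) → P), IsAltChain c b → d ≤ s) {x : P}
    {d : ℕ} {b : Fin (d + 1) → P} (hb : IsAltChain c b) (hbx : ∀ i, b i ≤ x) :
    d ≤ altDepth c x :=
  le_csSup ⟨s, fun _ ⟨b', hb', _⟩ => hs _ b' hb'⟩ ⟨b, hb, hbx⟩

theorem exists_isAltChain_altDepth
    (hs : ∀ (d : ℕ) (b : Fin (d + 1) → P), IsAltChain c b → d ≤ s) (x : P) :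
    ∃ b : Fin (altDepth c x + 1) → P, IsAltChain c b ∧ ∀ i, b i ≤ x :=
  Nat.sSup_mem (s := {d | ∃ b : Fin (d + 1) → P, IsAltChain c b ∧ ∀ i, b i ≤ x})
    ⟨0, _, .const c ⊥, fun _ => bot_le⟩ ⟨s, fun _ ⟨b', hb', _⟩ => hs _ b' hb'⟩

theorem altDepth_le (hs : ∀ (d : ℕ) (b : Fin (d + 1) → P), IsAltChain c b → d ≤ s) (x : P) :
    altDepth c x ≤ s :=
  let ⟨b, hb, _⟩ := exists_isAltChain_altDepth hs x
  hs _ b hb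

theorem altDepth_mono (hs : ∀ (d : ℕ) (b : Fin (d + 1) → P), IsAltChain c b → d ≤ s) :
    Monotone (altDepth c) := fun x _ hxy =>
  let ⟨_, hb, hbx⟩ := exists_isAltChain_altDepth hs x
  le_altDepth hs hb fun i => (hbx i).trans hxy

theorem apply_eq_xor_bodd_altDepth
    (hs : ∀ (d : ℕ) (b : Fin (d + 1) → P), IsAltChain c b → d ≤ s) (x : P) :
    c x = xor (c ⊥) (altDepth c x).bodd := by
  obtain ⟨b, hb, hbx⟩ := exists_isAltChain_altDepth hs x
  have hfirst : c (b 0) = c ⊥ := by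
    by_contra hne
    have hext := hb.cons (bot_lt_iff_ne_bot.2 fun h => hne (congrArg c h)) (Ne.symm hne)
    have := le_altDepth hs hext (Fin.cases bot_le hbx)
    omega
  have hlast : c (b (Fin.last _)) = c x := by
    by_contra hne
    have hext := hb.snoc ((hbx _).lt_of_ne fun h => hne (congrArg c h)) hne
    have := le_altDepth hs (x := x) hext fun i => by cases i using Fin.lastCases <;> simp [hbx]
    omega
  rw [← hlast, hb.apply_eq_xor_bodd, hfirst, Fin.val_last]

end altDepth

theorem stmt10_general {P : Type*} [PartialOrder P] [OrderBot P] (c : P → Bool)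
    (s : ℕ) (a : Fin (s + 1) → P) (h0 : a 0 = ⊥) (hchain : IsAltChain c a)
    (hlongest : ∀ (d : ℕ) (b : Fin (d + 1) → P), IsAltChain c b → d ≤ s) :
    (∃ h : P → Fin (s + 1), (∀ x, (h x : ℕ) = altDepth c x) ∧
      Monotone h ∧ ∀ x, c (a (h x)) = c x) ∧
    Monotone a := by
  have hdepth x : altDepth c x < s + 1 := Nat.lt_succ_of_le (altDepth_le hlongest x)
  refine ⟨⟨fun x => ⟨altDepth c x, hdepth x⟩, fun _ => rfl,
    fun _ _ hxy => Fin.mk_le_mk.2 (altDepth_mono hlongest hxy), fun x => ?_⟩, hchain.1.monotone⟩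
  rw [hchain.apply_eq_xor_bodd, h0, apply_eq_xor_bodd_altDepth hlongest x]

/-- Every finite 2-poset with a least element is homomorphically equivalent to its
longest alternating 2-chain: the map `x ↦ a (altDepth x)` is a homomorphism `P → A`
and the inclusion `A → P` is a homomorphism. -/
theorem stmt10 {P : Type*} [PartialOrder P] [OrderBot P] [Fintype P] (c : P → Bool)
    (s : ℕ) (a : Fin (s + 1) → P) (h0 : a 0 = ⊥) (hchain : IsAltChain c a)
    (hlongest : ∀ (d : ℕ) (b : Fin (d + 1) → P), IsAltChain c b → d ≤ s) :
    (∃ h : P → Fin (s + 1), (∀ x, (h x : ℕ) = altDepth c x) ∧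
      Monotone h ∧ ∀ x, c (a (h x)) = c x) ∧
    Monotone a :=
  stmt10_general c s a h0 hchain hlongest
end

section
/- For Boolean functions f, g with k := Alt(f), ℓ := Alt(g), a := f(0,…,0), b := g(0,…,0): f is an M_c-minor of g, where M_c is the clone generated by binary ∧ and ∨ (the monotone idempotent clone, equivalently monotone functions preserving both 0 and 1), if and only if k ≤ ℓ, a = b, and k ≡ ℓ (mod 2). -/
section Aux
set_option linter.unusedVariables false

variable {N : ℕ}

/-- auxiliary: chain condition for ℕ-indexed chains -/
def AuxCC (f : (Fin N → Bool) → Bool) (a : ℕ → Fin N → Bool) (d : ℕ) : Prop :=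
  (∀ i < d, a i < a (i + 1)) ∧ ∀ i < d, f (a i) ≠ f (a (i + 1))

def auxBot : Fin N → Bool := fun _ => false
def auxTop : Fin N → Bool := fun _ => true

lemma auxBot_le (x : Fin N → Bool) : auxBot ≤ x := fun _ => Bool.false_le _
lemma le_auxTop (x : Fin N → Bool) : x ≤ auxTop := fun _ => Bool.le_true _

lemma aux_bool_ne {x y : Bool} (h : x ≠ y) : y = !x := by
  cases x <;> cases y <;> simp_all

lemma auxMonoAlong {a : ℕ → Fin N → Bool} {d : ℕ} (h : ∀ i < d, a i < a (i + 1)) :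
    ∀ s t, s ≤ t → t ≤ d → a s ≤ a t := by
  intro s t hst htd
  induction t with
  | zero =>
      have : s = 0 := by omega
      subst this; exact le_rfl
  | succ t ih =>
      rcases Nat.lt_or_ge s (t + 1) with h1 | h2
      · exact le_trans (ih (by omega) (by omega)) (h t (by omega)).le
      · have : s = t + 1 := by omega
        subst this; exact le_rfl

lemma auxValAlong {f : (Fin N → Bool) → Bool} {a : ℕ → Fin N → Bool} {d : ℕ}
    (h : ∀ i < d, f (a i) ≠ f (a (i + 1))) :
    ∀ j ≤ d, f (a j) = if j % 2 = 0 then f (a 0) else ! f (a 0) := by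
  intro j hj
  induction j with
  | zero => simp
  | succ j ih =>
      have hv := aux_bool_ne (h j (by omega))
      have ih' := ih (by omega)
      rcases Nat.mod_two_eq_zero_or_one j with h2 | h2
      · have h3 : (j + 1) % 2 = 1 := by omega
        rw [hv, ih']; simp [h2, h3]
      · have h3 : (j + 1) % 2 = 0 := by omega
        rw [hv, ih']; simp [h2, h3]

def auxWt (x : Fin N → Bool) : ℕ := (Finset.univ.filter (fun j => x j = true)).card

lemma auxWt_lt {x y : Fin N → Bool} (h : x < y) : auxWt x < auxWt y := by
  have hle := h.le
  have hsub : Finset.univ.filter (fun j => x j = true) ⊆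
      Finset.univ.filter (fun j => y j = true) := by
    intro j hj
    simp only [Finset.mem_filter, Finset.mem_univ, true_and] at *
    have := hle j
    rw [hj] at this
    revert this; cases y j <;> simp
  have hne : x ≠ y := h.ne
  rw [Function.ne_iff] at hne
  obtain ⟨j, hjne⟩ := hne
  have hxy := hle j
  have hxj : x j = false ∧ y j = true := by
    revert hxy hjne; cases x j <;> cases y j <;> simp
  apply Finset.card_lt_card
  rw [Finset.ssubset_iff_of_subset hsub]
  exact ⟨j, by simp [hxj.2], by simp [hxj.1]⟩

lemma auxCC_bdd {f : (Fin N → Bool) → Bool} {a : ℕ → Fin N → Bool} {d : ℕ}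
    (h : AuxCC f a d) : d ≤ N := by
  have key : ∀ j, j ≤ d → j ≤ auxWt (a j) := by
    intro j hj
    induction j with
    | zero => omega
    | succ j ih =>
        have h1 := auxWt_lt (h.1 j (by omega))
        have h2 := ih (by omega)
        omega
  have h1 := key d le_rfl
  have h2 : auxWt (a d) ≤ N := by
    have := Finset.card_filter_le (Finset.univ : Finset (Fin N)) (fun j => a d j = true)
    simpa [auxWt] using this
  omega

end Aux


noncomputable def altNum {n : ℕ} (f : (Fin n → Bool) → Bool) : ℕ :=
  sSup { d | ∃ a : Fin (d + 1) → (Fin n → Bool),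
    StrictMono a ∧ ∀ i : Fin d, f (a i.castSucc) ≠ f (a i.succ) }


lemma altNum_eq {N : ℕ} (f : (Fin N → Bool) → Bool) :
    altNum f = sSup { d | ∃ a : ℕ → Fin N → Bool, AuxCC f a d } := by
  unfold altNum
  congr 1
  ext d
  constructor
  · rintro ⟨a, ha, hal⟩
    refine ⟨fun i => a ⟨min i d, by omega⟩, ?_, ?_⟩
    · intro i hi
      have e1 : min i d = i := by omega
      have e2 : min (i + 1) d = i + 1 := by omega
      simp only [e1, e2]
      exact ha (by exact Fin.mk_lt_mk.mpr (by omega))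
    · intro i hi
      have e1 : min i d = i := by omega
      have e2 : min (i + 1) d = i + 1 := by omega
      simp only [e1, e2]
      exact hal ⟨i, hi⟩
  · rintro ⟨a, ha, hal⟩
    refine ⟨fun i => a i.val, ?_, ?_⟩
    · rw [Fin.strictMono_iff_lt_succ]
      intro i
      exact ha i.val i.isLt
    · intro i
      exact hal i.val i.isLt

section Reach
variable {N : ℕ} (f : (Fin N → Bool) → Bool)

noncomputable def reach (x : Fin N → Bool) : ℕ :=
  sSup { d | ∃ a : ℕ → Fin N → Bool, AuxCC f a d ∧ a d = x }

variable {f}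

lemma auxCC_zero (x : Fin N → Bool) : AuxCC f (fun _ => x) 0 :=
  ⟨fun i hi => absurd hi (by omega), fun i hi => absurd hi (by omega)⟩

lemma reach_mem (x : Fin N → Bool) :
    ∃ a : ℕ → Fin N → Bool, AuxCC f a (reach f x) ∧ a (reach f x) = x := by
  have := Nat.sSup_mem (s := { d | ∃ a : ℕ → Fin N → Bool, AuxCC f a d ∧ a d = x })
    ⟨0, fun _ => x, auxCC_zero x, rfl⟩ ⟨N, fun d ⟨a, hc, _⟩ => auxCC_bdd hc⟩
  exact this

lemma le_reach {x : Fin N → Bool} {d : ℕ} {a : ℕ → Fin N → Bool}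
    (hc : AuxCC f a d) (hd : a d = x) : d ≤ reach f x :=
  le_csSup ⟨N, fun d ⟨a, hc, _⟩ => auxCC_bdd hc⟩ ⟨a, hc, hd⟩

/-- prepend the bottom element to a chain whose first value differs -/
lemma auxCC_prepend {a : ℕ → Fin N → Bool} {d : ℕ} (hc : AuxCC f a d)
    (h0 : f (a 0) ≠ f auxBot) :
    ∃ a' : ℕ → Fin N → Bool, AuxCC f a' (d + 1) ∧ a' (d + 1) = a d := by
  refine ⟨fun i => if i = 0 then auxBot else a (i - 1), ⟨?_, ?_⟩, by simp⟩
  · intro i hi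
    rcases Nat.eq_zero_or_pos i with h | h
    · subst h
      simp only [if_pos rfl, if_neg (by omega : (0:ℕ) + 1 ≠ 0)]
      have hne : a 0 ≠ auxBot := fun e => h0 (by rw [e])
      exact lt_of_le_of_ne (auxBot_le _) (Ne.symm (by simpa using hne))
    · simp only [if_neg (by omega : i ≠ 0), if_neg (by omega : i + 1 ≠ 0)]
      have := hc.1 (i - 1) (by omega)
      have e : i - 1 + 1 = i := by omega
      rw [e] at this
      have e2 : i + 1 - 1 = i := by omega
      rw [e2]
      exact this
  · intro i hi
    rcases Nat.eq_zero_or_pos i with h | h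
    · subst h
      simp only [if_pos rfl, if_neg (by omega : (0:ℕ) + 1 ≠ 0)]
      simpa using fun e => h0 e.symm
    · simp only [if_neg (by omega : i ≠ 0), if_neg (by omega : i + 1 ≠ 0)]
      have := hc.2 (i - 1) (by omega)
      have e : i - 1 + 1 = i := by omega
      rw [e] at this
      have e2 : i + 1 - 1 = i := by omega
      rw [e2]
      exact this

/-- append the top element to a chain whose last value differs -/
lemma auxCC_append {a : ℕ → Fin N → Bool} {d : ℕ} (hc : AuxCC f a d)
    (h1 : f (a d) ≠ f auxTop) :
    ∃ a' : ℕ → Fin N → Bool, AuxCC f a' (d + 1) ∧ a' (d + 1) = auxTop := by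
  refine ⟨fun i => if i ≤ d then a i else auxTop, ⟨?_, ?_⟩, by simp⟩
  · intro i hi
    rcases Nat.lt_or_ge i d with h | h
    · simp only [if_pos (by omega : i ≤ d), if_pos (by omega : i + 1 ≤ d)]
      exact hc.1 i h
    · have hea : i = d := by omega
      subst hea
      simp only [if_pos le_rfl, if_neg (by omega : ¬ i + 1 ≤ i)]
      have hne : a i ≠ auxTop := fun e => h1 (by rw [e])
      exact lt_of_le_of_ne (le_auxTop _) hne
  · intro i hi
    rcases Nat.lt_or_ge i d with h | h
    · simp only [if_pos (by omega : i ≤ d), if_pos (by omega : i + 1 ≤ d)]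
      exact hc.2 i h
    · have he : i = d := by omega
      subst he
      simp only [if_pos (le_refl i), if_neg (by omega : ¬ i + 1 ≤ i)]
      exact h1

lemma reach_bot : reach f (auxBot : Fin N → Bool) = 0 := by
  have h2 : reach f (auxBot : Fin N → Bool) ≤ 0 := by
    have hne : Set.Nonempty { d | ∃ a : ℕ → Fin N → Bool, AuxCC f a d ∧ a d = (auxBot : Fin N → Bool) } :=
      ⟨0, ⟨fun _ => auxBot, auxCC_zero _, rfl⟩⟩
    unfold reach
    apply csSup_le hne
    rintro d ⟨a, hc, hd⟩
    by_contra hd0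
    have h1 := hc.1 (d - 1) (by omega)
    have e : d - 1 + 1 = d := by omega
    rw [e, hd] at h1
    exact absurd (auxBot_le (a (d - 1))) (not_le_of_gt h1)
  omega

lemma reach_mono {x y : Fin N → Bool} (hxy : x ≤ y) : reach f x ≤ reach f y := by
  obtain ⟨a, hc, hd⟩ := reach_mem (f := f) x
  set d := reach f x with hdd
  by_cases hfx : f x = f y
  · rcases Nat.eq_zero_or_pos d with h | h
    · omega
    · refine le_reach (a := fun i => if i < d then a i else y) ⟨?_, ?_⟩ (by simp)
      · intro i hi
        rcases Nat.lt_or_ge (i + 1) d with h2 | h2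
        · simp only [if_pos (by omega : i < d), if_pos h2]
          exact hc.1 i hi
        · have he : i + 1 = d := by omega
          simp only [if_pos hi, if_neg (by omega : ¬ i + 1 < d)]
          have h3 := hc.1 i hi
          rw [he, hd] at h3
          exact lt_of_lt_of_le h3 hxy
      · intro i hi
        rcases Nat.lt_or_ge (i + 1) d with h2 | h2
        · simp only [if_pos (by omega : i < d), if_pos h2]
          exact hc.2 i hi
        · have he : i + 1 = d := by omega
          simp only [if_pos hi, if_neg (by omega : ¬ i + 1 < d)]
          have h3 := hc.2 i hi
          rw [he, hd, hfx] at h3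
          exact h3
  · have hne : x ≠ y := fun e => hfx (by rw [e])
    have hlt : x < y := lt_of_le_of_ne hxy hne
    have : d + 1 ≤ reach f y := by
      refine le_reach (a := fun i => if i ≤ d then a i else y) ⟨?_, ?_⟩
        (by simp [if_neg (by omega : ¬ d + 1 ≤ d)])
      · intro i hi
        rcases Nat.lt_or_ge i d with h | h
        · simp only [if_pos (by omega : i ≤ d), if_pos (by omega : i + 1 ≤ d)]
          exact hc.1 i h
        · have he : i = d := by omega
          simp only [he, hd]
          rw [if_pos (le_refl d), if_neg (by omega : ¬ d + 1 ≤ d)]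
          exact hlt
      · intro i hi
        rcases Nat.lt_or_ge i d with h | h
        · simp only [if_pos (by omega : i ≤ d), if_pos (by omega : i + 1 ≤ d)]
          exact hc.2 i h
        · have he : i = d := by omega
          simp only [he, hd]
          rw [if_pos (le_refl d), if_neg (by omega : ¬ d + 1 ≤ d)]
          exact hfx
    omega

end Reach

section More
variable {N : ℕ} {f : (Fin N → Bool) → Bool}

lemma alt_bdd : BddAbove { d | ∃ a : ℕ → Fin N → Bool, AuxCC f a d } :=
  ⟨N, fun d ⟨a, hc⟩ => auxCC_bdd hc⟩

lemma alt_mem : ∃ a : ℕ → Fin N → Bool, AuxCC f a (altNum f) := by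
  have h := Nat.sSup_mem (s := { d | ∃ a : ℕ → Fin N → Bool, AuxCC f a d })
    ⟨0, fun _ => auxBot, auxCC_zero _⟩ alt_bdd
  rw [altNum_eq f]
  exact h

lemma alt_le {a : ℕ → Fin N → Bool} {d : ℕ} (hc : AuxCC f a d) : d ≤ altNum f := by
  rw [altNum_eq f]
  exact le_csSup alt_bdd ⟨a, hc⟩

lemma reach_le_alt (x : Fin N → Bool) : reach f x ≤ altNum f := by
  obtain ⟨a, hc, _⟩ := reach_mem (f := f) x
  exact alt_le hc

lemma reach_top (hN : 0 < N) : reach f (auxTop : Fin N → Bool) = altNum f := by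
  refine le_antisymm (reach_le_alt _) ?_
  obtain ⟨a, hc⟩ := alt_mem (f := f)
  set k := altNum f with hk
  by_cases h1 : a k = auxTop
  · exact le_reach hc h1
  by_cases h2 : f (a k) = f auxTop
  · rcases Nat.eq_zero_or_pos k with h | h
    · omega
    · refine le_reach (a := fun i => if i < k then a i else auxTop) ⟨?_, ?_⟩ (by simp)
      · intro i hi
        rcases Nat.lt_or_ge (i + 1) k with h3 | h3
        · simp only [if_pos (by omega : i < k), if_pos h3]
          exact hc.1 i hi
        · have he : i + 1 = k := by omega
          simp only [if_pos hi, if_neg (by omega : ¬ i + 1 < k)]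
          have h4 := hc.1 i hi
          rw [he] at h4
          exact lt_of_lt_of_le h4 (le_auxTop _)
      · intro i hi
        rcases Nat.lt_or_ge (i + 1) k with h3 | h3
        · simp only [if_pos (by omega : i < k), if_pos h3]
          exact hc.2 i hi
        · have he : i + 1 = k := by omega
          simp only [if_pos hi, if_neg (by omega : ¬ i + 1 < k)]
          have h4 := hc.2 i hi
          rw [he, h2] at h4
          exact h4
  · obtain ⟨a', hc', hd'⟩ := auxCC_append hc h2
    have := le_reach hc' hd'
    omega

lemma reach_parity (x : Fin N → Bool) :
    f x = if reach f x % 2 = 0 then f auxBot else ! f auxBot := by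
  obtain ⟨a, hc, hd⟩ := reach_mem (f := f) x
  set d := reach f x with hdd
  have h0 : f (a 0) = f auxBot := by
    by_contra hne
    obtain ⟨a', hc', hd'⟩ := auxCC_prepend hc hne
    have := le_reach hc' (by rw [hd', hd])
    omega
  have := auxValAlong hc.2 d le_rfl
  rw [hd, h0] at this
  exact this

lemma alt_zero_const (h : altNum f = 0) (x : Fin N → Bool) : f x = f auxBot := by
  have h1 : reach f x = 0 := by
    have := reach_le_alt (f := f) x
    omega
  have := reach_parity (f := f) x
  rw [h1] at this
  simpa using this

lemma aux_top_lt_wrong : True := trivial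

end More

/-- `f` is an `M_c`-minor of `g` (where `M_c` is the clone of monotone Boolean
functions preserving both `0` and `1`) iff `Alt f ≤ Alt g`, `f(0) = g(0)`, and
`Alt f ≡ Alt g (mod 2)`. -/
theorem stmt14 {n m : ℕ} (f : (Fin (n + 1) → Bool) → Bool)
    (g : (Fin (m + 1) → Bool) → Bool) :
    (∃ h : Fin (m + 1) → (Fin (n + 1) → Bool) → Bool,
      (∀ i, Monotone (h i) ∧ h i (fun _ => false) = false ∧ h i (fun _ => true) = true) ∧
      ∀ x, f x = g fun i => h i x) ↔
    (altNum f ≤ altNum g ∧ f (fun _ => false) = g (fun _ => false) ∧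
      altNum f % 2 = altNum g % 2) := by
  constructor
  · rintro ⟨h, hprops, heq⟩
    have hf0 : f auxBot = g auxBot := by
      have h1 := heq auxBot
      have h2 : (fun i => h i auxBot) = (auxBot : Fin (m + 1) → Bool) :=
        funext fun i => (hprops i).2.1
      rw [h1, h2]
    have hf1 : f auxTop = g auxTop := by
      have h1 := heq auxTop
      have h2 : (fun i => h i auxTop) = (auxTop : Fin (m + 1) → Bool) :=
        funext fun i => (hprops i).2.2
      rw [h1, h2]
    have halt : altNum f ≤ altNum g := by
      obtain ⟨a, hc⟩ := alt_mem (f := f)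
      refine alt_le (a := fun i j => h j (a i)) ⟨?_, ?_⟩
      · intro i hi
        have hle : (fun j => h j (a i)) ≤ (fun j => h j (a (i + 1))) :=
          fun j => (hprops j).1 (hc.1 i hi).le
        refine lt_of_le_of_ne hle ?_
        intro e
        have h3 : g (fun j => h j (a i)) = g (fun j => h j (a (i + 1))) := congrArg g e
        rw [← heq, ← heq] at h3
        exact hc.2 i hi h3
      · intro i hi
        show g (fun j => h j (a i)) ≠ g (fun j => h j (a (i + 1)))
        rw [← heq, ← heq]
        exact hc.2 i hi
    refine ⟨halt, hf0, ?_⟩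
    have pf : f auxTop = (if altNum f % 2 = 0 then f auxBot else ! f auxBot) := by
      rw [← reach_top (f := f) (by omega : 0 < n + 1)]
      exact reach_parity _
    have pg : g auxTop = (if altNum g % 2 = 0 then g auxBot else ! g auxBot) := by
      rw [← reach_top (f := g) (by omega : 0 < m + 1)]
      exact reach_parity _
    rcases Nat.mod_two_eq_zero_or_one (altNum f) with e1 | e1 <;>
      rcases Nat.mod_two_eq_zero_or_one (altNum g) with e2 | e2 <;>
      rw [e1] at pf ⊢ <;> rw [e2] at pg ⊢ <;> simp at pf pg ⊢
    · exfalso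
      have hcon : g auxBot = ! g auxBot := by
        calc g auxBot = f auxBot := hf0.symm
          _ = f auxTop := pf.symm
          _ = g auxTop := hf1
          _ = ! g auxBot := pg
      simp at hcon
    · exfalso
      have hcon : f auxBot = ! f auxBot := by
        calc f auxBot = g auxBot := hf0
          _ = g auxTop := pg.symm
          _ = f auxTop := hf1.symm
          _ = ! f auxBot := pf
      simp at hcon
  · rintro ⟨hk, h0, hp⟩
    have h0' : f (auxBot : Fin (n + 1) → Bool) = g auxBot := h0
    by_cases hl0 : altNum g = 0
    · have hk0 : altNum f = 0 := by omega
      refine ⟨fun _ x => x 0, fun i => ⟨fun x y hxy => hxy 0, rfl, rfl⟩, ?_⟩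
      intro x
      have h1 : f x = f auxBot := alt_zero_const hk0 x
      have h2 : g (fun _ => x 0) = g auxBot := alt_zero_const hl0 _
      rw [h1, h2] at *
      exact h0'
    · obtain ⟨c, hcc⟩ := alt_mem (f := g)
      set L := altNum g with hL
      have hL1 : 1 ≤ L := by omega
      have gc0 : g (c 0) = g auxBot := by
        by_contra hne
        obtain ⟨a', hc', _⟩ := auxCC_prepend hcc hne
        have := alt_le hc'
        omega
      have gc1 : g (c L) = g auxTop := by
        by_contra hne
        obtain ⟨a', hc', _⟩ := auxCC_append hcc hne
        have := alt_le hc'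
        omega
      set b : ℕ → Fin (m + 1) → Bool :=
        fun j => if j = 0 then auxBot else if j < L then c j else auxTop with hb
      have hb0 : b 0 = auxBot := by simp [hb]
      have hbL : b L = auxTop := by
        rw [hb]
        simp only []
        rw [if_neg (by omega : ¬ L = 0), if_neg (by omega : ¬ L < L)]
      have hgb : ∀ j ≤ L, g (b j) = g (c j) := by
        intro j hj
        rcases Nat.eq_zero_or_pos j with hz | hz
        · subst hz; rw [hb0, gc0]
        · rcases Nat.lt_or_ge j L with h2 | h2
          · have : b j = c j := by
              rw [hb]; simp only []; rw [if_neg (by omega : ¬ j = 0), if_pos h2]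
            rw [this]
          · have hjL : j = L := by omega
            subst hjL; rw [hbL, gc1]
      have hblt : ∀ j < L, b j < b (j + 1) := by
        intro j hj
        have cpos : ∀ s, 0 < s → s ≤ L → (auxBot : Fin (m + 1) → Bool) < c s := by
          intro s hs hsL
          have h1 := hcc.1 (s - 1) (by omega)
          have e : s - 1 + 1 = s := by omega
          rw [e] at h1
          exact lt_of_le_of_lt (auxBot_le _) h1
        have ctop : ∀ s, s < L → c s < (auxTop : Fin (m + 1) → Bool) := by
          intro s hs
          exact lt_of_lt_of_le (hcc.1 s hs) (le_auxTop _)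
        rcases Nat.eq_zero_or_pos j with hz | hz
        · subst hz
          rw [hb0]
          rcases Nat.lt_or_ge 1 L with h2 | h2
          · have : b 1 = c 1 := by
              rw [hb]; simp only []; rw [if_neg one_ne_zero, if_pos h2]
            rw [this]
            exact cpos 1 one_pos (by omega)
          · have : b 1 = auxTop := by
              rw [hb]; simp only []; rw [if_neg one_ne_zero, if_neg (by omega : ¬ 1 < L)]
            rw [this]
            refine lt_of_le_of_ne (auxBot_le _) ?_
            intro e
            have := congrFun e ⟨0, by omega⟩
            simp [auxBot, auxTop] at this
        · have hbj : b j = c j := by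
            rw [hb]; simp only []; rw [if_neg (by omega : ¬ j = 0), if_pos hj]
          rcases Nat.lt_or_ge (j + 1) L with h2 | h2
          · have : b (j + 1) = c (j + 1) := by
              rw [hb]; simp only []; rw [if_neg (by omega : ¬ j + 1 = 0), if_pos h2]
            rw [hbj, this]
            exact hcc.1 j hj
          · have : b (j + 1) = auxTop := by
              rw [hb]; simp only []
              rw [if_neg (by omega : ¬ j + 1 = 0), if_neg (by omega : ¬ j + 1 < L)]
            rw [hbj, this]
            exact ctop j hj
      have hgne : ∀ j < L, g (b j) ≠ g (b (j + 1)) := by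
        intro j hj
        rw [hgb j hj.le, hgb (j + 1) hj]
        exact hcc.2 j hj
      have gb_par : ∀ s ≤ L, g (b s) = if s % 2 = 0 then g auxBot else ! g auxBot := by
        intro s hs
        have := auxValAlong hgne s hs
        rw [hb0] at this
        exact this
      set t : (Fin (n + 1) → Bool) → ℕ :=
        fun x => if x = auxTop then L else reach f x with hT
      have htle : ∀ x, t x ≤ L := by
        intro x
        rw [hT]; simp only []
        split
        · exact le_rfl
        · exact le_trans (reach_le_alt x) hk
      have htmono : ∀ x y, x ≤ y → t x ≤ t y := by
        intro x y hxy
        by_cases hy : y = auxTop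
        · have h1 : t y = L := by rw [hT]; simp only []; rw [if_pos hy]
          rw [h1]; exact htle x
        · have hx : x ≠ auxTop := by
            intro e
            subst e
            exact hy (le_antisymm (le_auxTop y) hxy)
          rw [hT]; simp only []
          rw [if_neg hx, if_neg hy]
          exact reach_mono hxy
      refine ⟨fun i x => b (t x) i, fun i => ⟨?_, ?_, ?_⟩, ?_⟩
      · intro x y hxy
        exact (auxMonoAlong hblt (t x) (t y) (htmono x y hxy) (htle y)) i
      · have hne : (fun _ => false : Fin (n + 1) → Bool) ≠ auxTop := by
          intro e
          have := congrFun e ⟨0, by omega⟩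
          simp [auxTop] at this
        have h1 : t (fun _ => false) = 0 := by
          rw [hT]; simp only []
          rw [if_neg hne]
          exact reach_bot
        show b (t (fun _ => false)) i = false
        rw [h1, hb0]
        rfl
      · have h1 : t (fun _ => true) = L := by
          rw [hT]; simp only []
          rw [if_pos (show (fun _ => true : Fin (n + 1) → Bool) = auxTop from rfl)]
        show b (t (fun _ => true)) i = true
        rw [h1, hbL]
        rfl
      · intro x
        show f x = g (b (t x))
        have hgb2 := gb_par (t x) (htle x)
        have hfp := reach_parity (f := f) x
        by_cases hx : x = auxTop
        · have h1 : t x = L := by rw [hT]; simp only []; rw [if_pos hx]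
          rw [h1] at hgb2
          rw [h1, hgb2]
          rw [hx] at hfp ⊢
          rw [reach_top (by omega : 0 < n + 1)] at hfp
          rw [hfp, hp, h0']
        · have h1 : t x = reach f x := by rw [hT]; simp only []; rw [if_neg hx]
          rw [h1] at hgb2
          rw [h1, hgb2, hfp, h0']
end

section
/- For every integer k ≥ 1, there exist Boolean functions f and g of arity 4k (given explicitly by λ_a and λ_b for the words a = (0100)^k 0 and b = (0001)^k 0) such that Alt(f) = Alt(g) = 2k, f(0,…,0) = f(1,…,1) = g(0,…,0) = g(1,…,1) = 0, but Alt(f ∨ g) = 4k. In particular, the class of Boolean functions with alternation number at most 2k, preserving 0 at 0 and 0 at 1, is not stable under pointwise join. -/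
/-- The Hamming weight of a Boolean tuple. -/
def hammingWt {m : ℕ} (x : Fin m → Bool) : ℕ :=
  (Finset.univ.filter fun i => x i = true).card

theorem hammingWt_le {m : ℕ} (x : Fin m → Bool) : hammingWt x ≤ m :=
  (Finset.card_filter_le _ _).trans (by simp)

/-- The Boolean function `λ_c` determined by a word `c = c₀c₁⋯c_m`:
`λ_c(x) = c_{w(x)}` where `w(x)` is the Hamming weight of `x`. -/
def lamWord {m : ℕ} (c : Fin (m + 1) → Bool) : (Fin m → Bool) → Bool :=
  fun x => c ⟨hammingWt x, Nat.lt_succ_of_le (hammingWt_le x)⟩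

def changeCount (c : ℕ → Bool) : ℕ → ℕ
  | 0 => 0
  | n + 1 => changeCount c n + if c n = c (n + 1) then 0 else 1

namespace changeCount

variable {c : ℕ → Bool}

theorem monotone : Monotone (changeCount c) :=
  monotone_nat_of_le_succ fun n => by simp only [changeCount]; omega

theorem succ_le (n : ℕ) : changeCount c (n + 1) ≤ changeCount c n + 1 := by
  simp only [changeCount]; split <;> omega

theorem apply_eq_apply_zero_iff_even (n : ℕ) : c n = c 0 ↔ Even (changeCount c n) := by
  induction n with
  | zero => simp [changeCount]
  | succ n ih =>
    simp only [changeCount]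
    split_ifs with h
    · simpa [← h] using ih
    · rw [Nat.even_add_one, ← ih]
      generalize c 0 = u, c n = v, c (n + 1) = w at h ⊢
      revert u v w; decide

theorem apply_eq_apply_iff (p q : ℕ) :
    c p = c q ↔ (Even (changeCount c p) ↔ Even (changeCount c q)) := by
  rw [← apply_eq_apply_zero_iff_even, ← apply_eq_apply_zero_iff_even]
  cases c 0 <;> cases c p <;> cases c q <;> simp

theorem add (m n : ℕ) :
    changeCount c (m + n) = changeCount c m + changeCount (fun i => c (m + i)) n := by
  induction n with
  | zero => rfl
  | succ n ih =>
    show changeCount c (m + n + 1) = _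
    simp only [changeCount, ih, Nat.add_assoc]

theorem mul_of_periodic {p : ℕ} (hc : Function.Periodic c p) (k : ℕ) :
    changeCount c (p * k) = k * changeCount c p := by
  induction k with
  | zero => simp [changeCount]
  | succ k ih =>
    have hshift : (fun i => c (p * k + i)) = c := by
      funext i; rw [Nat.add_comm, Nat.mul_comm]; exact hc.nat_mul k i
    rw [Nat.mul_succ, add, ih, hshift, Nat.succ_mul]

/-- Discrete intermediate value theorem, as `changeCount c` grows in steps of at most one. -/
theorem exists_eq_of_le {i n : ℕ} (h : i ≤ changeCount c n) :
    ∃ p ≤ n, changeCount c p = i := by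
  induction n with
  | zero => exact ⟨0, le_rfl, by simp_all [changeCount]⟩
  | succ n ih =>
    by_cases hi : i ≤ changeCount c n
    · obtain ⟨p, hp, rfl⟩ := ih hi
      exact ⟨p, by omega, rfl⟩
    · exact ⟨n + 1, le_rfl, by have := succ_le (c := c) n; omega⟩

end changeCount

theorem hammingWt_mono {n : ℕ} : Monotone (hammingWt : (Fin n → Bool) → ℕ) :=
  fun _ _ hxy => Finset.card_le_card fun j => by
    simpa using fun hj : _ = true => Bool.le_iff_imp.mp (hxy j) hj

@[simp] theorem hammingWt_const_false {n : ℕ} : hammingWt (fun _ : Fin n => false) = 0 := by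
  simp [hammingWt]

@[simp] theorem hammingWt_const_true {n : ℕ} : hammingWt (fun _ : Fin n => true) = n := by
  simp [hammingWt]

def prefixOnes (n p : ℕ) : Fin n → Bool := fun j => decide ((j : ℕ) < p)

theorem prefixOnes_mono (n : ℕ) : Monotone (prefixOnes n) :=
  fun _ _ hpq j => by simp only [prefixOnes, Bool.le_iff_imp, decide_eq_true_eq]; omega

theorem hammingWt_prefixOnes {n p : ℕ} (h : p ≤ n) : hammingWt (prefixOnes n p) = p := by
  simp [hammingWt, prefixOnes, Fin.card_filter_val_lt, h]

section symmetric

variable {n : ℕ} (c : ℕ → Bool)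

/-- Along a chain the count `changeCount c ∘ hammingWt` is monotone and changes parity at
every alternation, so it is strictly increasing with values in `[0, changeCount c n]`. -/
theorem le_changeCount_of_monotone {d : ℕ} (a : Fin (d + 1) → Fin n → Bool) (ha : Monotone a)
    (halt : ∀ i : Fin d, c (hammingWt (a i.castSucc)) ≠ c (hammingWt (a i.succ))) :
    d ≤ changeCount c n := by
  set g : Fin (d + 1) → ℕ := fun i => changeCount c (hammingWt (a i))
  have hg : StrictMono g := Fin.strictMono_iff_lt_succ.mpr fun i =>
    (changeCount.monotone (hammingWt_mono (ha i.castSucc_le_succ))).lt_of_ne fun h =>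
      halt i ((changeCount.apply_eq_apply_iff _ _).mpr (by rw [h]))
  have hmaps : ∀ i ∈ Finset.univ, g i ∈ Finset.range (changeCount c n + 1) := fun i _ =>
    Finset.mem_range_succ_iff.mpr (changeCount.monotone (hammingWt_le _))
  simpa using Finset.card_le_card_of_injOn g hmaps hg.injective.injOn

/-- The chain of prefix tuples at weights where `changeCount c` takes the values
`0, 1, …, changeCount c n` in turn. -/
theorem exists_strictMono_alternating :
    ∃ a : Fin (changeCount c n + 1) → Fin n → Bool, StrictMono a ∧
      ∀ i : Fin (changeCount c n), c (hammingWt (a i.castSucc)) ≠ c (hammingWt (a i.succ)) := by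
  choose p hpn hp using fun i : Fin (changeCount c n + 1) =>
    changeCount.exists_eq_of_le (c := c) (Nat.lt_succ_iff.mp i.isLt)
  refine ⟨fun i => prefixOnes n (p i), fun i j hij => ?_, fun i h => ?_⟩
  · have hp_lt : p i < p j := changeCount.monotone.reflect_lt (by rw [hp, hp]; exact hij)
    refine (prefixOnes_mono n hp_lt.le).lt_of_ne fun heq => ?_
    have := congrArg hammingWt heq
    rw [hammingWt_prefixOnes (hpn i), hammingWt_prefixOnes (hpn j)] at this
    omega
  · rw [hammingWt_prefixOnes (hpn _), hammingWt_prefixOnes (hpn _),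
      changeCount.apply_eq_apply_iff, hp, hp] at h
    simp only [Fin.val_castSucc, Fin.val_succ, Nat.even_add_one] at h
    exact iff_not_self h

theorem altNum_comp_hammingWt :
    altNum (fun x : Fin n → Bool => c (hammingWt x)) = changeCount c n :=
  IsGreatest.csSup_eq ⟨exists_strictMono_alternating c,
    fun _ ⟨a, ha, halt⟩ => le_changeCount_of_monotone c a ha.monotone halt⟩

end symmetric

theorem altNum_lamWord (c : ℕ → Bool) (m : ℕ) :
    altNum (lamWord fun i : Fin (m + 1) => c i) = changeCount c m :=
  altNum_comp_hammingWt c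

/-- For every `k ≥ 1` there are Boolean functions `f = λ_{(0100)^k 0}` and
`g = λ_{(0001)^k 0}` of arity `4k` with `Alt f = Alt g = 2k`, vanishing at `0`
and at `1`, whose pointwise join has alternation number `4k`.  In particular the
class of functions with alternation number at most `2k` and value `0` at both
constant tuples is not stable under pointwise join. -/
theorem stmt16 (k : ℕ) (hk : 1 ≤ k) :
    ∃ f g : (Fin (4 * k) → Bool) → Bool,
      f = lamWord (fun i : Fin (4 * k + 1) => decide ((i : ℕ) % 4 = 1)) ∧
      g = lamWord (fun i : Fin (4 * k + 1) => decide ((i : ℕ) % 4 = 3)) ∧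
      altNum f = 2 * k ∧ altNum g = 2 * k ∧
      f (fun _ => false) = false ∧ f (fun _ => true) = false ∧
      g (fun _ => false) = false ∧ g (fun _ => true) = false ∧
      altNum (fun x => f x || g x) = 4 * k ∧
      ¬ altNum (fun x => f x || g x) ≤ 2 * k := by
  have count {c : ℕ → Bool} (hc : Function.Periodic c 4) {r : ℕ} (h4 : changeCount c 4 = r) :
      changeCount c (4 * k) = r * k := by
    rw [changeCount.mul_of_periodic hc, h4, Nat.mul_comm]
  have periodic (r : ℕ) : Function.Periodic (fun i : ℕ => decide (i % 4 = r)) 4 := fun i => by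
    simp only [Nat.add_mod_right]
  have hf : altNum (lamWord fun i : Fin (4 * k + 1) => decide ((i : ℕ) % 4 = 1)) = 2 * k :=
    (altNum_lamWord _ _).trans (count (periodic 1) (by decide))
  have hg : altNum (lamWord fun i : Fin (4 * k + 1) => decide ((i : ℕ) % 4 = 3)) = 2 * k :=
    (altNum_lamWord _ _).trans (count (periodic 3) (by decide))
  have hfg : altNum (fun x : Fin (4 * k) → Bool =>
      (lamWord fun i : Fin (4 * k + 1) => decide ((i : ℕ) % 4 = 1)) x ||
      (lamWord fun i : Fin (4 * k + 1) => decide ((i : ℕ) % 4 = 3)) x) = 4 * k :=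
    (altNum_comp_hammingWt fun i => decide (i % 4 = 1) || decide (i % 4 = 3)).trans
      (count (fun i => by simp only [Nat.add_mod_right]) (by decide))
  refine ⟨_, _, rfl, rfl, hf, hg, ?_, ?_, ?_, ?_, hfg, by omega⟩ <;> simp [lamWord]
end

section
/- The set K of all Boolean functions f such that f is monotone with f(0,…,0)=0, or ¬f is monotone with (¬f)(1,…,1)=1, or Alt(f) ≤ 2 with f(0,…,0)=f(1,…,1)=1, is stable under pointwise join: for all f, g ∈ K of the same arity, f ∨ g ∈ K. -/
namespace Stmt17Aux

/-- A function has "no dip" if it never takes values false, true, false along a chain. -/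
def NoDip {n : ℕ} (φ : (Fin n → Bool) → Bool) : Prop :=
  ∀ b0 b1 b2 : Fin n → Bool, b0 < b1 → b1 < b2 →
    φ b0 = false → φ b1 = true → φ b2 = false → False

lemma noDip_of_monotone {n : ℕ} {φ : (Fin n → Bool) → Bool} (h : Monotone φ) : NoDip φ := by
  intro b0 b1 b2 h01 h12 v0 v1 v2
  have := h h12.le
  rw [v1, v2] at this
  exact absurd this (by decide)

lemma noDip_of_antitone {n : ℕ} {φ : (Fin n → Bool) → Bool}
    (h : Monotone fun x => !(φ x)) : NoDip φ := by
  intro b0 b1 b2 h01 h12 v0 v1 v2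
  have := h h01.le
  simp only [v0, v1] at this
  exact absurd this (by decide)

lemma altSet_bdd {n : ℕ} (f : (Fin n → Bool) → Bool) :
    ∀ d ∈ { d | ∃ a : Fin (d + 1) → (Fin n → Bool),
      StrictMono a ∧ ∀ i : Fin d, f (a i.castSucc) ≠ f (a i.succ) }, d ≤ n := by
  rintro d ⟨a, ha, -⟩
  set N : Fin (d + 1) → ℕ := fun i => (Finset.univ.filter fun j => a i j = true).card with hNdef
  have hN : StrictMono N := by
    intro i j hij
    have hlt := ha hij
    rw [Pi.lt_def] at hlt
    obtain ⟨hle, k, hk⟩ := hlt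
    apply Finset.card_lt_card
    constructor
    · intro x hx
      simp only [Finset.mem_filter, Finset.mem_univ, true_and] at hx ⊢
      have := hle x
      rw [hx] at this
      exact (le_antisymm this (Bool.le_true _)).symm
    · intro hsub
      have hk' := Bool.lt_iff.mp hk
      have : k ∈ Finset.univ.filter fun j => a i j = true := by
        apply hsub
        simp [hk'.2]
      simp only [Finset.mem_filter] at this
      rw [this.2] at hk'
      exact absurd hk'.1 (by decide)
  have hcard : (Finset.univ : Finset (Fin (d + 1))).card ≤ (Finset.Iic n).card := by
    apply Finset.card_le_card_of_injOn N
    · intro i _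
      simp only [Finset.mem_coe, Finset.mem_Iic]
      calc N i ≤ (Finset.univ : Finset (Fin n)).card := Finset.card_filter_le _ _
        _ = n := by simp
    · exact fun i _ j _ h => hN.injective h
  simpa using hcard

lemma three_le_altNum {n : ℕ} (f : (Fin n → Bool) → Bool)
    (b0 b1 b2 b3 : Fin n → Bool) (h01 : b0 < b1) (h12 : b1 < b2) (h23 : b2 < b3)
    (v0 : f b0 ≠ f b1) (v1 : f b1 ≠ f b2) (v2 : f b2 ≠ f b3) : 3 ≤ altNum f := by
  apply le_csSup ⟨n, fun d hd => altSet_bdd f d hd⟩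
  refine ⟨![b0, b1, b2, b3], ?_, ?_⟩
  · rw [Fin.strictMono_iff_lt_succ]
    intro i
    fin_cases i <;> simpa
  · intro i
    fin_cases i <;> simpa

lemma noDip_of_alt {n : ℕ} {φ : (Fin n → Bool) → Bool} (h2 : altNum φ ≤ 2)
    (h01 : φ (fun _ => true) = true ∨ φ (fun _ => false) = true) : NoDip φ := by
  intro b0 b1 b2 hb01 hb12 v0 v1 v2
  rcases h01 with h1 | h0
  · have hlt : b2 < (fun _ => true : Fin n → Bool) := by
      apply lt_of_le_of_ne (fun i => Bool.le_true _)
      intro h; rw [h, h1] at v2; exact absurd v2 (by decide)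
    have := three_le_altNum φ b0 b1 b2 (fun _ => true) hb01 hb12 hlt
      (by rw [v0, v1]; decide) (by rw [v1, v2]; decide) (by rw [v2, h1]; decide)
    omega
  · have hlt : (fun _ => false : Fin n → Bool) < b0 := by
      apply lt_of_le_of_ne (fun i => Bool.false_le _)
      intro h; rw [← h, h0] at v0; exact absurd v0 (by decide)
    have := three_le_altNum φ (fun _ => false) b0 b1 b2 hlt hb01 hb12
      (by rw [h0, v0]; decide) (by rw [v0, v1]; decide) (by rw [v1, v2]; decide)
    omega

lemma altNum_or_le {n : ℕ} {f g : (Fin n → Bool) → Bool}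
    (hf : NoDip f) (hg : NoDip g) : altNum (fun x => f x || g x) ≤ 2 := by
  apply csSup_le'
  rintro d ⟨a, ha, hne⟩
  by_contra hd
  push_neg at hd
  have hd3 : 3 ≤ d := hd
  set x0 := a ⟨0, by omega⟩
  set x1 := a ⟨1, by omega⟩
  set x2 := a ⟨2, by omega⟩
  set x3 := a ⟨3, by omega⟩
  have l01 : x0 < x1 := ha (by simp [Fin.lt_def])
  have l12 : x1 < x2 := ha (by simp [Fin.lt_def])
  have l23 : x2 < x3 := ha (by simp [Fin.lt_def])
  have n01 : (f x0 || g x0) ≠ (f x1 || g x1) := by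
    have := hne ⟨0, by omega⟩
    simpa [Fin.castSucc_mk, Fin.succ_mk, x0, x1] using this
  have n12 : (f x1 || g x1) ≠ (f x2 || g x2) := by
    have := hne ⟨1, by omega⟩
    simpa [Fin.castSucc_mk, Fin.succ_mk, x1, x2] using this
  have n23 : (f x2 || g x2) ≠ (f x3 || g x3) := by
    have := hne ⟨2, by omega⟩
    simpa [Fin.castSucc_mk, Fin.succ_mk, x2, x3] using this
  cases hv0 : (f x0 || g x0) with
  | false =>
    have hv1 : (f x1 || g x1) = true := by
      cases h : (f x1 || g x1)
      · exact absurd (hv0.trans h.symm) n01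
      · rfl
    have hv2 : (f x2 || g x2) = false := by
      cases h : (f x2 || g x2)
      · rfl
      · exact absurd (hv1.trans h.symm) n12
    have h0 := Bool.or_eq_false_iff.mp hv0
    have h2 := Bool.or_eq_false_iff.mp hv2
    rcases Bool.or_eq_true_iff.mp hv1 with h1 | h1
    · exact hf x0 x1 x2 l01 l12 h0.1 h1 h2.1
    · exact hg x0 x1 x2 l01 l12 h0.2 h1 h2.2
  | true =>
    have hv1 : (f x1 || g x1) = false := by
      cases h : (f x1 || g x1)
      · rfl
      · exact absurd (hv0.trans h.symm) n01
    have hv2 : (f x2 || g x2) = true := by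
      cases h : (f x2 || g x2)
      · exact absurd (hv1.trans h.symm) n12
      · rfl
    have hv3 : (f x3 || g x3) = false := by
      cases h : (f x3 || g x3)
      · rfl
      · exact absurd (hv2.trans h.symm) n23
    have h1 := Bool.or_eq_false_iff.mp hv1
    have h3 := Bool.or_eq_false_iff.mp hv3
    rcases Bool.or_eq_true_iff.mp hv2 with h2 | h2
    · exact hf x1 x2 x3 l12 l23 h1.1 h2 h3.1
    · exact hg x1 x2 x3 l12 l23 h1.2 h2 h3.2

lemma mono_or {n : ℕ} {f g : (Fin n → Bool) → Bool} (hf : Monotone f) (hg : Monotone g) :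
    Monotone fun x => f x || g x := by
  intro x y h
  have h1 := hf h; have h2 := hg h
  cases hx : f x <;> cases hy : f y <;> cases hgx : g x <;> cases hgy : g y <;> simp_all

lemma mono_nor {n : ℕ} {f g : (Fin n → Bool) → Bool} (hf : Monotone fun x => !(f x))
    (hg : Monotone fun x => !(g x)) : Monotone fun x => !(f x || g x) := by
  intro x y h
  have h1 := hf h; have h2 := hg h
  simp only at h1 h2
  cases hx : f x <;> cases hy : f y <;> cases hgx : g x <;> cases hgy : g y <;> simp_all

lemma all_false_of_mono {n : ℕ} {f : (Fin n → Bool) → Bool} (hf : Monotone f)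
    (h1 : f (fun _ => true) = false) : ∀ x, f x = false := by
  intro x
  have := hf (show x ≤ (fun _ => true) from fun i => Bool.le_true _)
  rw [h1] at this
  exact le_antisymm this (Bool.false_le _)

lemma all_false_of_anti {n : ℕ} {f : (Fin n → Bool) → Bool} (hf : Monotone fun x => !(f x))
    (h0 : f (fun _ => false) = false) : ∀ x, f x = false := by
  intro x
  have h2 := hf (show (fun _ => false) ≤ x from fun i => Bool.false_le _)
  simp only [h0, Bool.not_false] at h2
  cases hx : f x
  · rfl
  · rw [hx] at h2; exact absurd h2 (by decide)

end Stmt17Aux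

open Stmt17Aux in
/-- The class `K = M₀ ∪ ¬M₁ ∪ {f : Alt f ≤ 2, f(0) = f(1) = 1}` of Boolean
functions (monotone with value 0 at 0, or complement of a monotone function with
value 1 at 1, or alternation number at most 2 with value 1 at both constant
tuples) is stable under pointwise join. -/
theorem stmt17 {n : ℕ} (f g : (Fin (n + 1) → Bool) → Bool)
    (hf : (Monotone f ∧ f (fun _ => false) = false) ∨
      ((Monotone fun x => !(f x)) ∧ f (fun _ => true) = false) ∨
      (altNum f ≤ 2 ∧ f (fun _ => false) = true ∧ f (fun _ => true) = true))
    (hg : (Monotone g ∧ g (fun _ => false) = false) ∨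
      ((Monotone fun x => !(g x)) ∧ g (fun _ => true) = false) ∨
      (altNum g ≤ 2 ∧ g (fun _ => false) = true ∧ g (fun _ => true) = true)) :
    (Monotone (fun x => f x || g x) ∧ (f (fun _ => false) || g (fun _ => false)) = false) ∨
      ((Monotone fun x => !(f x || g x)) ∧ (f (fun _ => true) || g (fun _ => true)) = false) ∨
      (altNum (fun x => f x || g x) ≤ 2 ∧
        (f (fun _ => false) || g (fun _ => false)) = true ∧
        (f (fun _ => true) || g (fun _ => true)) = true) := by
  rcases hf with ⟨hfm, hf0⟩ | ⟨hfm, hf1⟩ | ⟨hfa, hf0, hf1⟩ <;>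
    rcases hg with ⟨hgm, hg0⟩ | ⟨hgm, hg1⟩ | ⟨hga, hg0, hg1⟩
  · -- M0, M0
    exact Or.inl ⟨mono_or hfm hgm, by simp [hf0, hg0]⟩
  · -- M0, ¬M1
    cases hf1 : f (fun _ => true) with
    | false =>
      have hff := all_false_of_mono hfm hf1
      refine Or.inr (Or.inl ⟨?_, by simp [hf1, hg1]⟩)
      intro x y h
      have h2 := hgm h
      simp only at h2
      simpa [hff x, hff y] using h2
    | true =>
      cases hg0 : g (fun _ => false) with
      | false =>
        have hgg := all_false_of_anti hgm hg0
        refine Or.inl ⟨?_, by simp [hf0, hg0]⟩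
        intro x y h
        simpa [hgg x, hgg y] using hfm h
      | true =>
        exact Or.inr (Or.inr ⟨altNum_or_le (noDip_of_monotone hfm) (noDip_of_antitone hgm),
          by simp [hg0], by simp [hf1]⟩)
  · -- M0, A
    exact Or.inr (Or.inr ⟨altNum_or_le (noDip_of_monotone hfm)
      (noDip_of_alt hga (Or.inl hg1)), by simp [hg0], by simp [hg1]⟩)
  · -- ¬M1, M0
    cases hg1 : g (fun _ => true) with
    | false =>
      have hgg := all_false_of_mono hgm hg1
      refine Or.inr (Or.inl ⟨?_, by simp [hf1, hg1]⟩)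
      intro x y h
      have h2 := hfm h
      simp only at h2
      simpa [hgg x, hgg y] using h2
    | true =>
      cases hf0 : f (fun _ => false) with
      | false =>
        have hff := all_false_of_anti hfm hf0
        refine Or.inl ⟨?_, by simp [hf0, hg0]⟩
        intro x y h
        simpa [hff x, hff y] using hgm h
      | true =>
        exact Or.inr (Or.inr ⟨altNum_or_le (noDip_of_antitone hfm) (noDip_of_monotone hgm),
          by simp [hf0], by simp [hg1]⟩)
  · -- ¬M1, ¬M1
    exact Or.inr (Or.inl ⟨mono_nor hfm hgm, by simp [hf1, hg1]⟩)
  · -- ¬M1, A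
    exact Or.inr (Or.inr ⟨altNum_or_le (noDip_of_antitone hfm)
      (noDip_of_alt hga (Or.inl hg1)), by simp [hg0], by simp [hg1]⟩)
  · -- A, M0
    exact Or.inr (Or.inr ⟨altNum_or_le (noDip_of_alt hfa (Or.inl hf1))
      (noDip_of_monotone hgm), by simp [hf0], by simp [hf1]⟩)
  · -- A, ¬M1
    exact Or.inr (Or.inr ⟨altNum_or_le (noDip_of_alt hfa (Or.inl hf1))
      (noDip_of_antitone hgm), by simp [hf0], by simp [hf1]⟩)
  · -- A, A
    exact Or.inr (Or.inr ⟨altNum_or_le (noDip_of_alt hfa (Or.inl hf1))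
      (noDip_of_alt hga (Or.inl hg1)), by simp [hf0], by simp [hf1]⟩)
end

section
/- Let K ⊆ O_{{0,1}} be a set of Boolean functions stable under left composition with the clone generated by ∨ (i.e., ∨(f,g) ∈ K whenever f, g ∈ K have the same arity). If K contains all functions f with f(x) ≠ f(x̄) for every x, f(0,…,0)=a and f(1,…,1)=ā (the self-dual functions with those endpoint values), then K contains all majorants of self-dual functions with the same endpoint values, i.e., all g with g(x) ∨ g(x̄) = 1 for all x, g(0,…,0)=a, g(1,…,1)=ā. -/
/-- Let `K` be a set of Boolean functions stable under pointwise join of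
equal-arity members.  If `K` contains every self-dual function with value `a`
at `0` and `!a` at `1`, then `K` contains every majorant of a self-dual function
with the same endpoint values. -/
theorem stmt18 (K : Set (Σ n : ℕ, (Fin (n + 1) → Bool) → Bool)) (a : Bool)
    (hjoin : ∀ (n : ℕ) (f g : (Fin (n + 1) → Bool) → Bool),
      (⟨n, f⟩ : Σ n : ℕ, (Fin (n + 1) → Bool) → Bool) ∈ K →
      (⟨n, g⟩ : Σ n : ℕ, (Fin (n + 1) → Bool) → Bool) ∈ K →
      (⟨n, fun x => f x || g x⟩ : Σ n : ℕ, (Fin (n + 1) → Bool) → Bool) ∈ K)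
    (hsd : ∀ (n : ℕ) (f : (Fin (n + 1) → Bool) → Bool),
      (∀ x, f x ≠ f fun i => !(x i)) →
      f (fun _ => false) = a → f (fun _ => true) = !a →
      (⟨n, f⟩ : Σ n : ℕ, (Fin (n + 1) → Bool) → Bool) ∈ K) :
    ∀ (n : ℕ) (g : (Fin (n + 1) → Bool) → Bool),
      (∀ x, g x || g (fun i => !(x i)) = true) →
      g (fun _ => false) = a → g (fun _ => true) = !a →
      (⟨n, g⟩ : Σ n : ℕ, (Fin (n + 1) → Bool) → Bool) ∈ K := by
  intro n g hmaj h0 h1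
  let g₁ : (Fin (n + 1) → Bool) → Bool :=
    fun x => if (g x && g (fun i => !(x i))) = true then x 0 else g x
  let g₂ : (Fin (n + 1) → Bool) → Bool :=
    fun x => if (g x && g (fun i => !(x i))) = true then !(x 0) else g x
  have hxx : ∀ x : Fin (n + 1) → Bool,
      (fun i => !((fun i => !(x i)) i)) = x := by
    intro x; funext i; exact Bool.not_not _
  have e1 : ∀ x, g₁ x = if (g x && g (fun i => !(x i))) = true then x 0 else g x :=
    fun _ => rfl
  have e1' : ∀ x, g₁ (fun i => !(x i)) =
      if (g (fun i => !(x i)) && g x) = true then !(x 0) else g (fun i => !(x i)) := by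
    intro x
    show (if (g (fun i => !(x i)) && g (fun i => !((fun i => !(x i)) i))) = true
      then (fun i => !(x i)) 0 else g (fun i => !(x i))) = _
    rw [hxx x]
  have e2 : ∀ x, g₂ x = if (g x && g (fun i => !(x i))) = true then !(x 0) else g x :=
    fun _ => rfl
  have e2' : ∀ x, g₂ (fun i => !(x i)) =
      if (g (fun i => !(x i)) && g x) = true then !(!(x 0)) else g (fun i => !(x i)) := by
    intro x
    show (if (g (fun i => !(x i)) && g (fun i => !((fun i => !(x i)) i))) = true
      then !((fun i => !(x i)) 0) else g (fun i => !(x i))) = _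
    rw [hxx x]
  have hsd1 : ∀ x, g₁ x ≠ g₁ fun i => !(x i) := by
    intro x
    rw [e1 x, e1' x]
    have hm := hmaj x
    cases hu : g x <;> cases hv : g (fun i => !(x i)) <;>
      rw [hu, hv] at hm <;> simp at hm ⊢ <;> cases x 0 <;> simp
  have hsd2 : ∀ x, g₂ x ≠ g₂ fun i => !(x i) := by
    intro x
    rw [e2 x, e2' x]
    have hm := hmaj x
    cases hu : g x <;> cases hv : g (fun i => !(x i)) <;>
      rw [hu, hv] at hm <;> simp at hm ⊢ <;> cases x 0 <;> simp
  have ez1 : g₁ (fun _ => false) =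
      if (g (fun _ => false) && g (fun _ => true)) = true then false
      else g (fun _ => false) := rfl
  have eo1 : g₁ (fun _ => true) =
      if (g (fun _ => true) && g (fun _ => false)) = true then true
      else g (fun _ => true) := rfl
  have ez2 : g₂ (fun _ => false) =
      if (g (fun _ => false) && g (fun _ => true)) = true then true
      else g (fun _ => false) := rfl
  have eo2 : g₂ (fun _ => true) =
      if (g (fun _ => true) && g (fun _ => false)) = true then false
      else g (fun _ => true) := rfl
  have m1 : (⟨n, g₁⟩ : Σ n : ℕ, (Fin (n + 1) → Bool) → Bool) ∈ K := by
    refine hsd n g₁ hsd1 ?_ ?_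
    · rw [ez1, h0, h1]; cases a <;> rfl
    · rw [eo1, h0, h1]; cases a <;> rfl
  have m2 : (⟨n, g₂⟩ : Σ n : ℕ, (Fin (n + 1) → Bool) → Bool) ∈ K := by
    refine hsd n g₂ hsd2 ?_ ?_
    · rw [ez2, h0, h1]; cases a <;> rfl
    · rw [eo2, h0, h1]; cases a <;> rfl
  have hj := hjoin n g₁ g₂ m1 m2
  have heq : (fun x => g₁ x || g₂ x) = g := by
    funext x
    rw [e1 x, e2 x]
    have hm := hmaj x
    cases hu : g x <;> cases hv : g (fun i => !(x i)) <;>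
      rw [hu, hv] at hm <;> simp at hm ⊢ <;> cases x 0 <;> simp
  rwa [heq] at hj
end
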